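/- arXiv:2010.04851 — 8 statements merged into one kernel-verified Lean document; each statement's English description precedes it below -/
import Mathlib

section
/- Let σ > 0 and N > 0 be reals, C a natural number, v : Fin C → ℝ, j* : Fin C, and γ > 0 with v j* - v j ≥ γ for all j ≠ j*. Let μ be the product measure on (Fin C → ℝ) whose coordinates are i.i.d. centered real Gaussian measures with variance σ²/N² (Measure.pi of gaussianReal 0 (σ²/N²)). Then μ {z | ∀ j ≠ j*, v j* + z j* > v j + z j} ≥ 1 - C · exp(-N²γ²/(8σ²)); that is, with probability at least 1 - C·exp(-N²γ²/(8σ²)) the privately released label (the argmax of the noisy votes v + z) matches the majority vote without noise. -/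
/-!
Each noise coordinate is sub-Gaussian with variance proxy `σ²/N²`, so the Chernoff bound makes
each of the events `z j* ≤ -γ/2` and `z j ≥ γ/2` (`j ≠ j*`) have probability at most
`exp (-N²γ²/(8σ²))`. Outside their union every competitor `j` satisfies
`v j + z j < v j - γ/2 + γ ≤ v j* + z j*`, and a union bound over these `C` events concludes.
-/

open MeasureTheory ProbabilityTheory Real Set
open scoped NNReal

lemma ProbabilityTheory.hasSubgaussianMGF_id_gaussianReal (v : ℝ≥0) :
    HasSubgaussianMGF id v (gaussianReal 0 v) where
  integrable_exp_mul t := integrable_exp_mul_gaussianReal t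
  mgf_le t := by simp [mgf_id_gaussianReal]

lemma ProbabilityTheory.HasSubgaussianMGF.comp_eval_pi {ι : Type*} [Fintype ι]
    {Ω : ι → Type*} [∀ i, MeasurableSpace (Ω i)] {μ : ∀ i, Measure (Ω i)}
    [∀ i, IsProbabilityMeasure (μ i)] {i : ι} {X : Ω i → ℝ} {c : ℝ≥0}
    (h : HasSubgaussianMGF X c (μ i)) :
    HasSubgaussianMGF (fun z => X (z i)) c (Measure.pi μ) := by
  have hmap := (measurePreserving_eval μ i).map_eq
  exact .of_map (Y := Function.eval i) (measurable_pi_apply i).aemeasurable (hmap ▸ h)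

section ArgmaxStability

variable {ι : Type*} [Fintype ι] [DecidableEq ι]

lemma compl_setOf_argmax_stable_subset (v : ι → ℝ) {i₀ : ι} {γ : ℝ}
    (hmargin : ∀ j ≠ i₀, v i₀ - v j ≥ γ) :
    {z : ι → ℝ | ∀ j ≠ i₀, v i₀ + z i₀ > v j + z j}ᶜ ⊆
      {z | γ / 2 ≤ -z i₀} ∪ ⋃ j ∈ Finset.univ.erase i₀, {z | γ / 2 ≤ z j} := by
  intro z hz
  simp only [mem_compl_iff, mem_ofPred_eq, not_forall, not_lt, exists_prop] at hz
  obtain ⟨j, hj, hle⟩ := hz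
  by_contra hout
  simp only [mem_union, mem_ofPred_eq, mem_iUnion, Finset.mem_erase, Finset.mem_univ, and_true,
    exists_prop, not_or, not_exists, not_and, not_le] at hout
  linarith [hmargin j hj, hout.2 j hj]

lemma measureReal_setOf_argmax_stable_ge {μ : Measure (ι → ℝ)} [IsProbabilityMeasure μ]
    {c : ℝ≥0} (hμ : ∀ i, HasSubgaussianMGF (fun z => z i) c μ) (v : ι → ℝ) {i₀ : ι} {γ : ℝ}
    (hγ : 0 ≤ γ) (hmargin : ∀ j ≠ i₀, v i₀ - v j ≥ γ) :
    1 - Fintype.card ι * exp (-(γ / 2) ^ 2 / (2 * c)) ≤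
      μ.real {z | ∀ j ≠ i₀, v i₀ + z i₀ > v j + z j} := by
  set bound := exp (-(γ / 2) ^ 2 / (2 * c))
  set B := {z : ι → ℝ | γ / 2 ≤ -z i₀} ∪ ⋃ j ∈ Finset.univ.erase i₀, {z | γ / 2 ≤ z j}
  have hB : MeasurableSet B := by
    refine .union (measurableSet_le (by fun_prop) (by fun_prop)) (.biUnion (to_countable _) ?_)
    exact fun j _ => measurableSet_le (by fun_prop) (by fun_prop)
  have hγ2 : 0 ≤ γ / 2 := by positivity
  have hBbound : μ.real B ≤ Fintype.card ι * bound :=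
    calc μ.real B
        ≤ μ.real {z | γ / 2 ≤ -z i₀} + ∑ j ∈ Finset.univ.erase i₀, μ.real {z | γ / 2 ≤ z j} :=
          (measureReal_union_le _ _).trans (by gcongr; exact measureReal_biUnion_finset_le _ _)
      _ ≤ bound + ∑ _j ∈ Finset.univ.erase i₀, bound := by
          gcongr with j
          · exact (hμ i₀).neg.measure_ge_le hγ2
          · exact (hμ j).measure_ge_le hγ2
      _ = Fintype.card ι * bound :=
          (Finset.add_sum_erase _ (fun _ => bound) (Finset.mem_univ i₀)).trans (by simp)
  calc 1 - Fintype.card ι * bound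
      ≤ μ.real Bᶜ := by rw [probReal_compl_eq_one_sub hB]; linarith
    _ ≤ μ.real {z | ∀ j ≠ i₀, v i₀ + z i₀ > v j + z j} :=
        measureReal_mono (compl_subset_comm.mp (compl_setOf_argmax_stable_subset v hmargin))

end ArgmaxStability

theorem stmt_1 (σ N : ℝ) (hσ : 0 < σ) (hN : 0 < N) (C : ℕ) (v : Fin C → ℝ)
    (jstar : Fin C) (γ : ℝ) (hγ : 0 < γ)
    (hmargin : ∀ j ≠ jstar, v jstar - v j ≥ γ) :
    ((Measure.pi fun _ : Fin C => gaussianReal 0 ((σ ^ 2 / N ^ 2).toNNReal))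
        {z : Fin C → ℝ | ∀ j ≠ jstar, v jstar + z jstar > v j + z j}).toReal ≥
      1 - C * Real.exp (-(N ^ 2 * γ ^ 2) / (8 * σ ^ 2)) := by
  set w := (σ ^ 2 / N ^ 2).toNNReal
  have hw : (w : ℝ) = σ ^ 2 / N ^ 2 := Real.coe_toNNReal _ (by positivity)
  have hexponent : -(γ / 2) ^ 2 / (2 * (w : ℝ)) = -(N ^ 2 * γ ^ 2) / (8 * σ ^ 2) := by
    rw [hw]; field_simp; ring
  have hcoord (i : Fin C) :
      HasSubgaussianMGF (fun z => z i) w (Measure.pi fun _ => gaussianReal 0 w) :=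
    (hasSubgaussianMGF_id_gaussianReal w).comp_eval_pi (μ := fun _ => gaussianReal 0 w)
  have h := measureReal_setOf_argmax_stable_ge hcoord v hγ.le hmargin
  rwa [hexponent, Fintype.card_fin] at h
end

section
/- Let σ > 0, let α > 1 be real, and let μ₁, μ₂ ∈ ℝ. Then ∫ x, (gaussianPDFReal μ₁ σ² x)^α · (gaussianPDFReal μ₂ σ² x)^(1-α) dx = exp(α·(α-1)·(μ₁-μ₂)²/(2σ²)), where the integral is over ℝ with Lebesgue measure. Equivalently, the Rényi divergence of order α between N(μ₁, σ²) and N(μ₂, σ²), defined as (1/(α-1))·log of the above integral, equals α·(μ₁-μ₂)²/(2σ²). -/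
/-!
The geometric mixture `p₁ ^ α * p₂ ^ (1 - α)` of two Gaussian densities with a common variance
`v` is again, up to a constant factor, the Gaussian density of variance `v`, centred at
`α μ₁ + (1 - α) μ₂`: completing the square in the exponent leaves the constant
`exp (α (α - 1) (μ₁ - μ₂)² / (2 v))`, which is therefore the value of the integral.
-/

open MeasureTheory ProbabilityTheory NNReal

namespace ProbabilityTheory

lemma sq_sub_mul_add_sq_sub_mul_one_sub (x μ₁ μ₂ α : ℝ) :
    (x - μ₁) ^ 2 * α + (x - μ₂) ^ 2 * (1 - α) =
      (x - (α * μ₁ + (1 - α) * μ₂)) ^ 2 - α * (α - 1) * (μ₁ - μ₂) ^ 2 := by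
  ring

lemma gaussianPDFReal_rpow_mul_rpow_one_sub (μ₁ μ₂ : ℝ) {v : ℝ≥0} (hv : v ≠ 0) (α x : ℝ) :
    gaussianPDFReal μ₁ v x ^ α * gaussianPDFReal μ₂ v x ^ (1 - α) =
      Real.exp (α * (α - 1) * (μ₁ - μ₂) ^ 2 / (2 * v)) *
        gaussianPDFReal (α * μ₁ + (1 - α) * μ₂) v x := by
  have hv' : (0 : ℝ) < v := NNReal.coe_pos.mpr (pos_iff_ne_zero.mpr hv)
  set c := (√(2 * Real.pi * v))⁻¹
  have hc : 0 ≤ c := by positivity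
  have hc_rpow : c ^ α * c ^ (1 - α) = c := by
    rw [← Real.rpow_add' hc (by norm_num), add_sub_cancel, Real.rpow_one]
  have hexp : -(x - μ₁) ^ 2 / (2 * v) * α + -(x - μ₂) ^ 2 / (2 * v) * (1 - α) =
      α * (α - 1) * (μ₁ - μ₂) ^ 2 / (2 * v) +
        -(x - (α * μ₁ + (1 - α) * μ₂)) ^ 2 / (2 * v) := by
    have := sq_sub_mul_add_sq_sub_mul_one_sub x μ₁ μ₂ α
    field_simp
    linarith
  simp only [gaussianPDFReal]
  rw [Real.mul_rpow hc (Real.exp_pos _).le, Real.mul_rpow hc (Real.exp_pos _).le,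
    ← Real.exp_mul, ← Real.exp_mul]
  calc c ^ α * Real.exp (-(x - μ₁) ^ 2 / (2 * v) * α) *
        (c ^ (1 - α) * Real.exp (-(x - μ₂) ^ 2 / (2 * v) * (1 - α)))
      = (c ^ α * c ^ (1 - α)) * Real.exp (-(x - μ₁) ^ 2 / (2 * v) * α +
          -(x - μ₂) ^ 2 / (2 * v) * (1 - α)) := by
        rw [Real.exp_add]; ring
    _ = _ := by
        rw [hc_rpow, hexp, Real.exp_add]; ring

lemma integral_gaussianPDFReal_rpow_mul_rpow_one_sub (μ₁ μ₂ : ℝ) {v : ℝ≥0} (hv : v ≠ 0)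
    (α : ℝ) :
    ∫ x, gaussianPDFReal μ₁ v x ^ α * gaussianPDFReal μ₂ v x ^ (1 - α) =
      Real.exp (α * (α - 1) * (μ₁ - μ₂) ^ 2 / (2 * v)) := by
  simp_rw [gaussianPDFReal_rpow_mul_rpow_one_sub μ₁ μ₂ hv]
  rw [integral_const_mul, integral_gaussianPDFReal_eq_one _ hv, mul_one]

lemma one_div_sub_one_mul_log_integral_gaussianPDFReal_rpow_mul_rpow_one_sub (μ₁ μ₂ : ℝ)
    {v : ℝ≥0} (hv : v ≠ 0) {α : ℝ} (hα : α ≠ 1) :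
    1 / (α - 1) * Real.log (∫ x, gaussianPDFReal μ₁ v x ^ α * gaussianPDFReal μ₂ v x ^ (1 - α)) =
      α * (μ₁ - μ₂) ^ 2 / (2 * v) := by
  have hα' : α - 1 ≠ 0 := sub_ne_zero.mpr hα
  rw [integral_gaussianPDFReal_rpow_mul_rpow_one_sub μ₁ μ₂ hv, Real.log_exp]
  field_simp

end ProbabilityTheory

theorem stmt_2 (σ : ℝ) (hσ : 0 < σ) (α : ℝ) (hα : 1 < α) (μ₁ μ₂ : ℝ) :
    (∫ x : ℝ, (gaussianPDFReal μ₁ ((σ ^ 2).toNNReal) x) ^ α *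
        (gaussianPDFReal μ₂ ((σ ^ 2).toNNReal) x) ^ (1 - α)) =
      Real.exp (α * (α - 1) * (μ₁ - μ₂) ^ 2 / (2 * σ ^ 2)) ∧
    (1 / (α - 1)) * Real.log (∫ x : ℝ, (gaussianPDFReal μ₁ ((σ ^ 2).toNNReal) x) ^ α *
        (gaussianPDFReal μ₂ ((σ ^ 2).toNNReal) x) ^ (1 - α)) =
      α * (μ₁ - μ₂) ^ 2 / (2 * σ ^ 2) := by
  have hσ2 : 0 < σ ^ 2 := by positivity
  have hv : (σ ^ 2).toNNReal ≠ 0 := by simpa using hσ.ne'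
  have hv_coe : ((σ ^ 2).toNNReal : ℝ) = σ ^ 2 := Real.coe_toNNReal _ hσ2.le
  constructor
  · rw [integral_gaussianPDFReal_rpow_mul_rpow_one_sub μ₁ μ₂ hv, hv_coe]
  · rw [one_div_sub_one_mul_log_integral_gaussianPDFReal_rpow_mul_rpow_one_sub μ₁ μ₂ hv hα.ne',
      hv_coe]
end

section
/- Let σ > 0, α > 1 real, s ≥ 0, and Q, C natural numbers. Let u, u' : Fin Q → Fin C → ℝ satisfy Σ_j (u t j - u' t j)² ≤ s² for every t : Fin Q. Then ∫ x, ∏_{t : Fin Q} ∏_{j : Fin C} (gaussianPDFReal (u t j) σ² (x t j))^α · (gaussianPDFReal (u' t j) σ² (x t j))^(1-α) ∂(pi Lebesgue measure on Fin Q → Fin C → ℝ) = exp(α·(α-1)·(Σ_t Σ_j (u t j - u' t j)²)/(2σ²)) ≤ exp((α-1) · Q·α·s²/(2σ²)). In particular, Q adaptive Gaussian-mechanism queries with per-query L2-sensitivity s and noise scale σ satisfy (α, Q·α·s²/(2σ²))-Rényi differential privacy; taking s² = 1 gives the agent-level guarantee (α, Qα/(2σ²)) of Theorem 1 for both AE-DPFL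 and kNN-DPFL, taking s² = 2 gives AE-DPFL's instance-level guarantee (α, Qα/σ²), and taking s² = 2/k gives kNN-DPFL's instance-level guarantee (α, Qα/(kσ²)). -/
/-!
Pointwise, `p_a ^ α * p_b ^ (1 - α)` is a constant multiple of the Gaussian density centred at
`α a + (1 - α) b`, by completing the square in the exponent; so its integral is that constant,
`exp (α (α - 1) (a - b)² / (2v))`. Fubini over the product measure turns the integral over all
`Q · C` coordinates into a product of these one-dimensional integrals, i.e. the exponent of a sum,
and the sensitivity bound on each query bounds the sum by `Q s²`.
-/

open MeasureTheory ProbabilityTheory Real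
open scoped NNReal

theorem gaussianPDFReal_rpow_mul_rpow (a b : ℝ) (v : ℝ≥0) (α x : ℝ) :
    gaussianPDFReal a v x ^ α * gaussianPDFReal b v x ^ (1 - α) =
      exp (α * (α - 1) * (a - b) ^ 2 / (2 * v)) *
        gaussianPDFReal (α * a + (1 - α) * b) v x := by
  set K := (√(2 * π * v))⁻¹
  have hK : K ^ α * K ^ (1 - α) = K := by
    rw [← rpow_add' (by positivity) (by simp), add_sub_cancel, rpow_one]
  -- `α (x - a)² + (1 - α) (x - b)² = (x - m)² + α (1 - α) (a - b)²` with `m = α a + (1 - α) b`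
  have hexp : -(x - a) ^ 2 / (2 * v) * α + -(x - b) ^ 2 / (2 * v) * (1 - α) =
      α * (α - 1) * (a - b) ^ 2 / (2 * v) + -(x - (α * a + (1 - α) * b)) ^ 2 / (2 * v) := by
    simp only [div_eq_mul_inv]
    ring
  simp only [gaussianPDFReal]
  rw [mul_rpow (by positivity) (exp_nonneg _), mul_rpow (by positivity) (exp_nonneg _),
    ← exp_mul, ← exp_mul]
  calc K ^ α * exp (-(x - a) ^ 2 / (2 * v) * α) *
        (K ^ (1 - α) * exp (-(x - b) ^ 2 / (2 * v) * (1 - α)))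
      = (K ^ α * K ^ (1 - α)) *
          exp (-(x - a) ^ 2 / (2 * v) * α + -(x - b) ^ 2 / (2 * v) * (1 - α)) := by
        rw [exp_add]; ring
    _ = _ := by rw [hK, hexp, exp_add]; ring

theorem integral_gaussianPDFReal_rpow_mul_rpow (a b : ℝ) {v : ℝ≥0} (hv : v ≠ 0) (α : ℝ) :
    ∫ x, gaussianPDFReal a v x ^ α * gaussianPDFReal b v x ^ (1 - α) =
      exp (α * (α - 1) * (a - b) ^ 2 / (2 * v)) := by
  simp_rw [gaussianPDFReal_rpow_mul_rpow]
  rw [integral_const_mul, integral_gaussianPDFReal_eq_one _ hv, mul_one]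

theorem integral_fintype_prod_eq_exp_sum {ι : Type*} [Fintype ι] {E : ι → Type*}
    {mE : ∀ i, MeasurableSpace (E i)} {μ : (i : ι) → Measure (E i)} [∀ i, SigmaFinite (μ i)]
    (f : (i : ι) → E i → ℝ) (c : ι → ℝ) (hf : ∀ i, ∫ x, f i x ∂(μ i) = exp (c i)) :
    ∫ x, ∏ i, f i (x i) ∂(Measure.pi μ) = exp (∑ i, c i) := by
  rw [integral_fintype_prod_eq_prod, exp_sum]
  exact Finset.prod_congr rfl fun i _ ↦ hf i

theorem integral_pi_gaussianPDFReal_rpow_mul_rpow {ι : Type*} [Fintype ι] (a b : ι → ℝ)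
    {v : ℝ≥0} (hv : v ≠ 0) (α : ℝ) :
    ∫ x : ι → ℝ, ∏ i, gaussianPDFReal (a i) v (x i) ^ α * gaussianPDFReal (b i) v (x i) ^ (1 - α)
        ∂(Measure.pi fun _ ↦ volume) =
      exp (α * (α - 1) * (∑ i, (a i - b i) ^ 2) / (2 * v)) := by
  rw [integral_fintype_prod_eq_exp_sum _ _
    fun i ↦ integral_gaussianPDFReal_rpow_mul_rpow (a i) (b i) hv α, Finset.mul_sum,
    Finset.sum_div]

theorem stmt_4_general (σ : ℝ) (hσ : 0 < σ) (α : ℝ) (hα : 1 < α) (s : ℝ)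
    (Q C : ℕ) (u u' : Fin Q → Fin C → ℝ)
    (hsens : ∀ t : Fin Q, (∑ j : Fin C, (u t j - u' t j) ^ 2) ≤ s ^ 2) :
    (∫ x : Fin Q → Fin C → ℝ, ∏ t : Fin Q, ∏ j : Fin C,
        (gaussianPDFReal (u t j) ((σ ^ 2).toNNReal) (x t j)) ^ α *
          (gaussianPDFReal (u' t j) ((σ ^ 2).toNNReal) (x t j)) ^ (1 - α)
        ∂(Measure.pi fun _ : Fin Q => Measure.pi fun _ : Fin C => volume)) =
      Real.exp (α * (α - 1) * (∑ t : Fin Q, ∑ j : Fin C, (u t j - u' t j) ^ 2) /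
        (2 * σ ^ 2)) ∧
    Real.exp (α * (α - 1) * (∑ t : Fin Q, ∑ j : Fin C, (u t j - u' t j) ^ 2) /
        (2 * σ ^ 2)) ≤
      Real.exp ((α - 1) * (Q * α * s ^ 2 / (2 * σ ^ 2))) := by
  have hv : ((σ ^ 2).toNNReal : ℝ) = σ ^ 2 := coe_toNNReal _ (by positivity)
  have hv0 : (σ ^ 2).toNNReal ≠ 0 := by
    rw [← NNReal.coe_ne_zero, hv]; positivity
  refine ⟨?_, exp_le_exp.2 ?_⟩
  · rw [integral_fintype_prod_eq_exp_sum _ _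
      fun t ↦ integral_pi_gaussianPDFReal_rpow_mul_rpow (u t) (u' t) hv0 α,
      hv, Finset.mul_sum, Finset.sum_div]
  · have hsum : ∑ t : Fin Q, ∑ j : Fin C, (u t j - u' t j) ^ 2 ≤ Q * s ^ 2 := by
      simpa using Finset.sum_le_sum fun t (_ : t ∈ Finset.univ) ↦ hsens t
    calc α * (α - 1) * (∑ t : Fin Q, ∑ j : Fin C, (u t j - u' t j) ^ 2) / (2 * σ ^ 2)
        ≤ α * (α - 1) * (Q * s ^ 2) / (2 * σ ^ 2) := by
          gcongr
      _ = (α - 1) * (Q * α * s ^ 2 / (2 * σ ^ 2)) := by ring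

theorem stmt_4 (σ : ℝ) (hσ : 0 < σ) (α : ℝ) (hα : 1 < α) (s : ℝ) (hs : 0 ≤ s)
    (Q C : ℕ) (u u' : Fin Q → Fin C → ℝ)
    (hsens : ∀ t : Fin Q, (∑ j : Fin C, (u t j - u' t j) ^ 2) ≤ s ^ 2) :
    (∫ x : Fin Q → Fin C → ℝ, ∏ t : Fin Q, ∏ j : Fin C,
        (gaussianPDFReal (u t j) ((σ ^ 2).toNNReal) (x t j)) ^ α *
          (gaussianPDFReal (u' t j) ((σ ^ 2).toNNReal) (x t j)) ^ (1 - α)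
        ∂(Measure.pi fun _ : Fin Q => Measure.pi fun _ : Fin C => volume)) =
      Real.exp (α * (α - 1) * (∑ t : Fin Q, ∑ j : Fin C, (u t j - u' t j) ^ 2) /
        (2 * σ ^ 2)) ∧
    Real.exp (α * (α - 1) * (∑ t : Fin Q, ∑ j : Fin C, (u t j - u' t j) ^ 2) /
        (2 * σ ^ 2)) ≤
      Real.exp ((α - 1) * (Q * α * s ^ 2 / (2 * σ ^ 2))) :=
  stmt_4_general σ hσ α hα s Q C u u' hsens
end

section
/- Let Y be a finite type, and let P, Q : Y → ℝ be probability vectors (P y ≥ 0, Q y > 0, Σ_y P y = 1, Σ_y Q y = 1). Let α > 1 be real, e : Y, q ∈ [0, 1) with Q e ≥ 1 - q, and ε ≥ 0 with Σ_y (P y)^(2α) · (Q y)^(1-2α) ≤ exp((2α-1)·ε). Then Σ_y (P y)^α · (Q y)^(1-α) ≤ (1-q)^(1-α) + sqrt(q) · exp((2α-1)·ε/2). Consequently the Rényi divergence D_α(P‖Q) := (1/(α-1))·log(Σ_y (P y)^α (Q y)^(1-α)) satisfies D_α(P‖Q) ≤ -log(1-q) + (1/(α-1))·log(1 + sqrt(q)·(1-q)^(α-1)·exp((2α-1)·ε/2)).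 -/
/-!
Split the Rényi sum at the heavy output `e`. Since `P e ≤ 1` and `Q e ≥ 1 - q`, the `e`-term is at
most `(1 - q) ^ (1 - α)`. On the remaining outputs, which carry `Q`-mass at most `q`, Cauchy–Schwarz
with the factorisation `P ^ α Q ^ (1 - α) = (P ^ α Q ^ (1/2 - α)) · Q ^ (1/2)` bounds the sum by
`√q` times the square root of the order-`2α` Rényi sum. The divergence bound is the logarithm of
this, after factoring out `(1 - q) ^ (1 - α)`.
-/

open Real Finset

lemma rpow_mul_rpow_one_sub_sq {p x : ℝ} (hp : 0 ≤ p) (hx : 0 < x) (α : ℝ) :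
    (p ^ α * x ^ (1 - α)) ^ 2 = p ^ (2 * α) * x ^ (1 - 2 * α) * x := by
  rw [mul_assoc, ← rpow_add_one hx.ne', mul_pow, ← rpow_mul_natCast hp,
    ← rpow_mul_natCast hx.le]
  congr 2 <;> push_cast <;> ring

lemma sq_sum_rpow_mul_rpow_one_sub_le {ι : Type*} (s : Finset ι) {P Q : ι → ℝ}
    (hP : ∀ i ∈ s, 0 ≤ P i) (hQ : ∀ i ∈ s, 0 < Q i) (α : ℝ) :
    (∑ i ∈ s, P i ^ α * Q i ^ (1 - α)) ^ 2 ≤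
      (∑ i ∈ s, P i ^ (2 * α) * Q i ^ (1 - 2 * α)) * ∑ i ∈ s, Q i :=
  sum_sq_le_sum_mul_sum_of_sq_le_mul s
    (fun i hi => mul_nonneg (rpow_nonneg (hP i hi) _) (rpow_pos_of_pos (hQ i hi) _).le)
    (fun i hi => (hQ i hi).le)
    (fun i hi => (rpow_mul_rpow_one_sub_sq (hP i hi) (hQ i hi) α).le)

lemma rpow_mul_rpow_one_sub_le {p x r α : ℝ} (hp₀ : 0 ≤ p) (hp₁ : p ≤ 1) (hr : 0 < r)
    (hrx : r ≤ x) (hα : 1 ≤ α) : p ^ α * x ^ (1 - α) ≤ r ^ (1 - α) := by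
  have hx : 0 < x := hr.trans_le hrx
  calc p ^ α * x ^ (1 - α) ≤ 1 * x ^ (1 - α) := by
        gcongr
        exact rpow_le_one hp₀ hp₁ (by linarith)
    _ ≤ r ^ (1 - α) := by
        rw [one_mul]
        exact rpow_le_rpow_of_nonpos hr hrx (by linarith)

theorem sum_rpow_mul_rpow_one_sub_le_of_one_sub_le_apply {Y : Type*} [Fintype Y] {P Q : Y → ℝ}
    (hP : ∀ y, 0 ≤ P y) (hQ : ∀ y, 0 < Q y) (hPsum : ∑ y, P y = 1) (hQsum : ∑ y, Q y = 1)
    {α q M : ℝ} (hα : 1 ≤ α) (hq : q < 1) {e : Y} (hQe : 1 - q ≤ Q e)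
    (hM : ∑ y, P y ^ (2 * α) * Q y ^ (1 - 2 * α) ≤ M) :
    ∑ y, P y ^ α * Q y ^ (1 - α) ≤ (1 - q) ^ (1 - α) + √q * √M := by
  classical
  have hPe : P e ≤ 1 := hPsum ▸ single_le_sum (fun y _ => hP y) (mem_univ e)
  rw [← add_sum_erase _ _ (mem_univ e)]
  gcongr ?_ + ?_
  · exact rpow_mul_rpow_one_sub_le (hP e) hPe (by linarith) hQe hα
  set s := univ.erase e
  have hQs₀ : 0 ≤ ∑ y ∈ s, Q y := sum_nonneg fun y _ => (hQ y).le
  have hQs : ∑ y ∈ s, Q y ≤ q := by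
    rw [sum_erase_eq_sub (mem_univ e), hQsum]
    linarith
  have hterm (y : Y) : 0 ≤ P y ^ (2 * α) * Q y ^ (1 - 2 * α) :=
    mul_nonneg (rpow_nonneg (hP y) _) (rpow_pos_of_pos (hQ y) _).le
  have hMs : ∑ y ∈ s, P y ^ (2 * α) * Q y ^ (1 - 2 * α) ≤ M :=
    (sum_le_sum_of_subset_of_nonneg (subset_univ s) fun y _ _ => hterm y).trans hM
  have hM₀ : 0 ≤ M := (sum_nonneg fun y _ => hterm y).trans hM
  rw [mul_comm, ← sqrt_mul hM₀]
  refine (le_abs_self _).trans (abs_le_sqrt ?_)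
  calc _ ≤ _ := sq_sum_rpow_mul_rpow_one_sub_le s (fun y _ => hP y) (fun y _ => hQ y) α
    _ ≤ M * q := mul_le_mul hMs hQs hQs₀ hM₀

lemma one_div_sub_one_mul_log_le {S r t α : ℝ} (hS : 0 < S) (hr : 0 < r) (ht : 0 ≤ t)
    (hα : 1 < α) (h : S ≤ r ^ (1 - α) + t) :
    1 / (α - 1) * log S ≤ -log r + 1 / (α - 1) * log (1 + t * r ^ (α - 1)) := by
  have hfactor : r ^ (1 - α) + t = r ^ (1 - α) * (1 + t * r ^ (α - 1)) := by
    rw [mul_add, mul_one, mul_left_comm, ← rpow_add hr]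
    norm_num
  have hlog : log S ≤ (1 - α) * log r + log (1 + t * r ^ (α - 1)) := by
    rw [← log_rpow hr, ← log_mul (rpow_pos_of_pos hr _).ne' (by positivity), ← hfactor]
    exact log_le_log hS h
  have hα' : 0 < α - 1 := by linarith
  calc 1 / (α - 1) * log S
      ≤ 1 / (α - 1) * ((1 - α) * log r + log (1 + t * r ^ (α - 1))) := by gcongr
    _ = -log r + 1 / (α - 1) * log (1 + t * r ^ (α - 1)) := by
        field_simp
        ring

lemma sum_rpow_mul_rpow_one_sub_pos {Y : Type*} [Fintype Y] {P Q : Y → ℝ}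
    (hP : ∀ y, 0 ≤ P y) (hQ : ∀ y, 0 < Q y) (hPsum : ∑ y, P y = 1) (α : ℝ) :
    0 < ∑ y, P y ^ α * Q y ^ (1 - α) := by
  obtain ⟨y, -, hy⟩ : ∃ y ∈ univ, (0 : ℝ) < P y :=
    exists_lt_of_sum_lt (by simp [hPsum])
  exact sum_pos' (fun y _ => mul_nonneg (rpow_nonneg (hP y) _) (rpow_pos_of_pos (hQ y) _).le)
    ⟨y, mem_univ y, mul_pos (rpow_pos_of_pos hy _) (rpow_pos_of_pos (hQ y) _)⟩

theorem stmt_6_general {Y : Type*} [Fintype Y] (P Q : Y → ℝ)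
    (hP : ∀ y, 0 ≤ P y) (hQ : ∀ y, 0 < Q y)
    (hPsum : ∑ y : Y, P y = 1) (hQsum : ∑ y : Y, Q y = 1)
    (α : ℝ) (hα : 1 < α) (e : Y) (q : ℝ) (hq1 : q < 1)
    (hQe : Q e ≥ 1 - q) (ε : ℝ)
    (hRDP : ∑ y : Y, (P y) ^ (2 * α) * (Q y) ^ (1 - 2 * α) ≤
      Real.exp ((2 * α - 1) * ε)) :
    (∑ y : Y, (P y) ^ α * (Q y) ^ (1 - α)) ≤
      (1 - q) ^ (1 - α) + Real.sqrt q * Real.exp ((2 * α - 1) * ε / 2) ∧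
    (1 / (α - 1)) * Real.log (∑ y : Y, (P y) ^ α * (Q y) ^ (1 - α)) ≤
      -Real.log (1 - q) + (1 / (α - 1)) * Real.log (1 +
        Real.sqrt q * (1 - q) ^ (α - 1) * Real.exp ((2 * α - 1) * ε / 2)) := by
  have hbound := sum_rpow_mul_rpow_one_sub_le_of_one_sub_le_apply hP hQ hPsum hQsum hα.le hq1 hQe hRDP
  rw [← exp_half] at hbound
  refine ⟨hbound, ?_⟩
  rw [mul_right_comm]
  exact one_div_sub_one_mul_log_le (sum_rpow_mul_rpow_one_sub_pos hP hQ hPsum α)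
    (by linarith) (by positivity) hα hbound

theorem stmt_6 {Y : Type*} [Fintype Y] (P Q : Y → ℝ)
    (hP : ∀ y, 0 ≤ P y) (hQ : ∀ y, 0 < Q y)
    (hPsum : ∑ y : Y, P y = 1) (hQsum : ∑ y : Y, Q y = 1)
    (α : ℝ) (hα : 1 < α) (e : Y) (q : ℝ) (hq0 : 0 ≤ q) (hq1 : q < 1)
    (hQe : Q e ≥ 1 - q) (ε : ℝ) (hε : 0 ≤ ε)
    (hRDP : ∑ y : Y, (P y) ^ (2 * α) * (Q y) ^ (1 - 2 * α) ≤
      Real.exp ((2 * α - 1) * ε)) :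
    (∑ y : Y, (P y) ^ α * (Q y) ^ (1 - α)) ≤
      (1 - q) ^ (1 - α) + Real.sqrt q * Real.exp ((2 * α - 1) * ε / 2) ∧
    (1 / (α - 1)) * Real.log (∑ y : Y, (P y) ^ α * (Q y) ^ (1 - α)) ≤
      -Real.log (1 - q) + (1 / (α - 1)) * Real.log (1 +
        Real.sqrt q * (1 - q) ^ (α - 1) * Real.exp ((2 * α - 1) * ε / 2)) :=
  stmt_6_general P Q hP hQ hPsum hQsum α hα e q hq1 hQe ε hRDP
end

section
/- Let (X, 𝒜) be a measurable space, P and Q probability measures on X with P absolutely continuous with respect to Q, Y a finite type, f : X → Y a measurable function, and α > 1 real. Assume the lintegral ∫⁻ x, (P.rnDeriv Q x)^α ∂Q is finite. Then Σ_{y : Y} (P (f⁻¹ {y})).toReal^α · (Q (f⁻¹ {y})).toReal^(1-α) ≤ (∫⁻ x, (P.rnDeriv Q x)^α ∂Q).toReal, where terms with Q(f⁻¹{y}) = 0 are interpreted as 0 (in which case also P(f⁻¹{y}) = 0 by absolute continuity). In other words, the order-α Rényi divergence between the pushforward measures f_*P and f_*Q is at most the order-α Rényi divergence between P and Q. -/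
/-! Partition `X` into the fibres `f ⁻¹' {y}`. On each fibre `s`, Hölder's inequality with
exponents `α` and `α / (α - 1)` applied to `dP/dQ · 1` gives
`P s ≤ (∫⁻ x in s, (dP/dQ)^α ∂Q)^(1/α) · (Q s)^(1 - 1/α)`, i.e.
`(P s)^α (Q s)^(1-α) ≤ ∫⁻ x in s, (dP/dQ)^α ∂Q`; summing over the fibres gives the claim. -/

open MeasureTheory

theorem Real.rpow_mul_rpow_one_sub_le_of_le {p q i α : ℝ} (hp : 0 ≤ p) (hq : 0 ≤ q)
    (hi : 0 ≤ i) (hα : 1 < α) (h : p ≤ i ^ (1 / α) * q ^ (1 - 1 / α)) :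
    p ^ α * q ^ (1 - α) ≤ i := by
  have hα0 : 0 < α := zero_lt_one.trans hα
  rcases hq.eq_or_lt with rfl | hq
  · -- `Real.rpow` sets `0 ^ (1 - α) = 0` although `1 - α < 0`
    rw [Real.zero_rpow (by linarith), mul_zero]
    exact hi
  have hpow : p ^ α ≤ i * q ^ (α - 1) :=
    calc p ^ α ≤ (i ^ (1 / α) * q ^ (1 - 1 / α)) ^ α := by gcongr
      _ = i * q ^ (α - 1) := by
        rw [Real.mul_rpow (by positivity) (by positivity), ← Real.rpow_mul hi,
          ← Real.rpow_mul hq.le, one_div_mul_cancel hα0.ne', Real.rpow_one, sub_mul,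
          one_div_mul_cancel hα0.ne', one_mul]
  calc p ^ α * q ^ (1 - α) ≤ i * q ^ (α - 1) * q ^ (1 - α) := by gcongr
    _ = i := by rw [mul_assoc, ← Real.rpow_add hq]; simp

theorem measure_le_setLIntegral_rnDeriv_rpow_mul {X : Type*} [MeasurableSpace X]
    {P Q : Measure X} [P.HaveLebesgueDecomposition Q] (hac : P ≪ Q) {s : Set X}
    (hs : MeasurableSet s) {α : ℝ} (hα : 1 < α) :
    P s ≤ (∫⁻ x in s, P.rnDeriv Q x ^ α ∂Q) ^ (1 / α) * Q s ^ (1 - 1 / α) := by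
  have hconj : α.HolderConjugate (α / (α - 1)) :=
    (Real.holderConjugate_iff_eq_conjExponent hα).2 rfl
  have holder := ENNReal.lintegral_mul_le_Lp_mul_Lq (Q.restrict s) hconj
    (Measure.measurable_rnDeriv P Q).aemeasurable (aemeasurable_const (b := (1 : ENNReal)))
  have hexp : 1 / (α / (α - 1)) = 1 - 1 / α := by field_simp
  simpa [Measure.setLIntegral_rnDeriv' hac hs, hexp] using holder

theorem toReal_rpow_mul_toReal_rpow_one_sub_le_setLIntegral_rnDeriv_rpow {X : Type*}
    [MeasurableSpace X] {P Q : Measure X} [P.HaveLebesgueDecomposition Q] [IsFiniteMeasure Q]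
    (hac : P ≪ Q) {s : Set X} (hs : MeasurableSet s) {α : ℝ} (hα : 1 < α)
    (hfin : ∫⁻ x in s, P.rnDeriv Q x ^ α ∂Q ≠ ⊤) :
    (P s).toReal ^ α * (Q s).toReal ^ (1 - α) ≤
      (∫⁻ x in s, P.rnDeriv Q x ^ α ∂Q).toReal := by
  have hα0 : 0 < α := zero_lt_one.trans hα
  refine Real.rpow_mul_rpow_one_sub_le_of_le ENNReal.toReal_nonneg ENNReal.toReal_nonneg
    ENNReal.toReal_nonneg hα ?_
  have hbound := measure_le_setLIntegral_rnDeriv_rpow_mul hac hs hα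
  have hexp : 0 ≤ 1 - 1 / α := by rw [sub_nonneg, div_le_one hα0]; exact hα.le
  have hfinite : (∫⁻ x in s, P.rnDeriv Q x ^ α ∂Q) ^ (1 / α) * Q s ^ (1 - 1 / α) ≠ ⊤ :=
    ENNReal.mul_ne_top (ENNReal.rpow_ne_top_of_nonneg (by positivity) hfin)
      (ENNReal.rpow_ne_top_of_nonneg hexp (measure_ne_top Q s))
  simpa [ENNReal.toReal_mul, ← ENNReal.toReal_rpow] using ENNReal.toReal_mono hfinite hbound

theorem sum_setLIntegral_preimage_singleton {X Y : Type*} [MeasurableSpace X] [Fintype Y]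
    [MeasurableSpace Y] [MeasurableSingletonClass Y] {f : X → Y} (hf : Measurable f)
    (μ : Measure X) (g : X → ENNReal) :
    ∑ y, ∫⁻ x in f ⁻¹' {y}, g x ∂μ = ∫⁻ x, g x ∂μ := by
  rw [← tsum_fintype (L := .unconditional _), ← lintegral_iUnion (fun y ↦ hf (measurableSet_singleton y))
    (pairwise_disjoint_fiber f), ← Set.preimage_iUnion, Set.iUnion_of_singleton,
    Set.preimage_univ, setLIntegral_univ]

theorem stmt_7 {X : Type*} [MeasurableSpace X] (P Q : Measure X)
    [IsProbabilityMeasure P] [IsProbabilityMeasure Q] (hac : P ≪ Q)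
    {Y : Type*} [Fintype Y] [MeasurableSpace Y] [MeasurableSingletonClass Y]
    (f : X → Y) (hf : Measurable f) (α : ℝ) (hα : 1 < α)
    (hfin : (∫⁻ x, (P.rnDeriv Q x) ^ α ∂Q) ≠ ⊤) :
    (∑ y : Y, ((P (f ⁻¹' {y})).toReal) ^ α * ((Q (f ⁻¹' {y})).toReal) ^ (1 - α)) ≤
      (∫⁻ x, (P.rnDeriv Q x) ^ α ∂Q).toReal := by
  have hfiber_fin : ∀ y, ∫⁻ x in f ⁻¹' {y}, P.rnDeriv Q x ^ α ∂Q ≠ ⊤ := fun y ↦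
    ne_top_of_le_ne_top hfin (setLIntegral_le_lintegral _ _)
  calc (∑ y, (P (f ⁻¹' {y})).toReal ^ α * (Q (f ⁻¹' {y})).toReal ^ (1 - α))
      ≤ ∑ y, (∫⁻ x in f ⁻¹' {y}, P.rnDeriv Q x ^ α ∂Q).toReal :=
        Finset.sum_le_sum fun y _ ↦
          toReal_rpow_mul_toReal_rpow_one_sub_le_setLIntegral_rnDeriv_rpow hac
            (hf (measurableSet_singleton y)) hα (hfiber_fin y)
    _ = (∫⁻ x, P.rnDeriv Q x ^ α ∂Q).toReal := by
        rw [← ENNReal.toReal_sum fun y _ ↦ hfiber_fin y, sum_setLIntegral_preimage_singleton hf]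
end

section
/- Let Y be a finite type, P, Q : Y → ℝ probability vectors with P y > 0 and Q y > 0 for all y, α > 1 real, and ε ≥ 0. Assume both Σ_y (P y)^α (Q y)^(1-α) ≤ exp((α-1)·ε) and Σ_y (Q y)^α (P y)^(1-α) ≤ exp((α-1)·ε) (i.e., D_α(P‖Q) ≤ ε and D_α(Q‖P) ≤ ε). Then for every subset S ⊆ Y, exp(-ε) · (Σ_{y ∈ S} Q y)^(α/(α-1)) ≤ Σ_{y ∈ S} P y ≤ exp(ε) · (Σ_{y ∈ S} Q y)^((α-1)/α). -/
/-! Writing `P = Q · (P / Q)`, the weighted Hölder inequality with weights `Q` gives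
`P(S) ≤ Q(S)^(1 - 1/α) · (∑_S P^α Q^(1-α))^(1/α) ≤ (exp ε · Q(S))^((α-1)/α)`.
This is the upper bound; applied with `P` and `Q` exchanged and raised to the power
`α/(α-1)` it becomes `Q(S)^(α/(α-1)) ≤ exp ε · P(S)`, the lower bound. -/

open Real Finset

theorem Finset.sum_le_sum_rpow_one_sub_inv_mul_sum_rpow_mul_rpow_one_sub {ι : Type*}
    (s : Finset ι) {p q : ι → ℝ} (hp : ∀ i, 0 ≤ p i) (hq : ∀ i, 0 < q i) {α : ℝ}
    (hα : 1 ≤ α) :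
    ∑ i ∈ s, p i ≤
      (∑ i ∈ s, q i) ^ (1 - α⁻¹) * (∑ i ∈ s, p i ^ α * q i ^ (1 - α)) ^ α⁻¹ := by
  have hweight : ∀ i, q i * (p i / q i) = p i := fun i => mul_div_cancel₀ _ (hq i).ne'
  have hpow : ∀ i, q i * (p i / q i) ^ α = p i ^ α * q i ^ (1 - α) := fun i => by
    rw [div_rpow (hp i) (hq i).le, rpow_sub (hq i), rpow_one]
    ring
  simpa only [hweight, hpow] using
    inner_le_weight_mul_Lp_of_nonneg s hα q (fun i => p i / q i) (fun i => (hq i).le)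
      (fun i => div_nonneg (hp i) (hq i).le)

theorem Finset.sum_le_rpow_exp_mul_sum_of_sum_rpow_mul_rpow_one_sub_le {ι : Type*}
    [Fintype ι] (s : Finset ι) {p q : ι → ℝ} (hp : ∀ i, 0 ≤ p i) (hq : ∀ i, 0 < q i)
    {α : ℝ} (hα : 1 < α) {ε : ℝ}
    (hpq : ∑ i, p i ^ α * q i ^ (1 - α) ≤ exp ((α - 1) * ε)) :
    ∑ i ∈ s, p i ≤ (exp ε * ∑ i ∈ s, q i) ^ ((α - 1) / α) := by
  have hα₀ : 0 < α := by linarith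
  have hexponent : 1 - α⁻¹ = (α - 1) / α := by field_simp
  have hterm : ∀ i, 0 ≤ p i ^ α * q i ^ (1 - α) := fun i =>
    mul_nonneg (rpow_nonneg (hp i) _) (rpow_nonneg (hq i).le _)
  have hsubset : ∑ i ∈ s, p i ^ α * q i ^ (1 - α) ≤ exp ((α - 1) * ε) :=
    (sum_le_univ_sum_of_nonneg hterm).trans hpq
  have hrenyi : (∑ i ∈ s, p i ^ α * q i ^ (1 - α)) ^ α⁻¹ ≤ exp ε ^ ((α - 1) / α) := by
    calc (∑ i ∈ s, p i ^ α * q i ^ (1 - α)) ^ α⁻¹ ≤ exp ((α - 1) * ε) ^ α⁻¹ :=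
          rpow_le_rpow (sum_nonneg fun i _ => hterm i) hsubset (by positivity)
      _ = exp ε ^ ((α - 1) / α) := by
          rw [← exp_mul, ← exp_mul]
          ring_nf
  calc ∑ i ∈ s, p i
      ≤ (∑ i ∈ s, q i) ^ (1 - α⁻¹) * (∑ i ∈ s, p i ^ α * q i ^ (1 - α)) ^ α⁻¹ :=
        s.sum_le_sum_rpow_one_sub_inv_mul_sum_rpow_mul_rpow_one_sub hp hq hα.le
    _ ≤ (∑ i ∈ s, q i) ^ ((α - 1) / α) * exp ε ^ ((α - 1) / α) := by
        rw [hexponent]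
        exact mul_le_mul_of_nonneg_left hrenyi
          (rpow_nonneg (sum_nonneg fun i _ => (hq i).le) _)
    _ = (exp ε * ∑ i ∈ s, q i) ^ ((α - 1) / α) := by
        rw [mul_comm, mul_rpow (exp_pos ε).le (sum_nonneg fun i _ => (hq i).le)]

theorem stmt_9_general {Y : Type*} [Fintype Y] (P Q : Y → ℝ)
    (hP : ∀ y, 0 < P y) (hQ : ∀ y, 0 < Q y)
    (α : ℝ) (hα : 1 < α) (ε : ℝ) (hε : 0 ≤ ε)
    (hPQ : ∑ y : Y, (P y) ^ α * (Q y) ^ (1 - α) ≤ Real.exp ((α - 1) * ε))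
    (hQP : ∑ y : Y, (Q y) ^ α * (P y) ^ (1 - α) ≤ Real.exp ((α - 1) * ε)) :
    ∀ S : Finset Y,
      Real.exp (-ε) * (∑ y ∈ S, Q y) ^ (α / (α - 1)) ≤ (∑ y ∈ S, P y) ∧
      (∑ y ∈ S, P y) ≤ Real.exp ε * (∑ y ∈ S, Q y) ^ ((α - 1) / α) := by
  intro S
  have hPS : 0 ≤ ∑ y ∈ S, P y := sum_nonneg fun y _ => (hP y).le
  have hQS : 0 ≤ ∑ y ∈ S, Q y := sum_nonneg fun y _ => (hQ y).le
  have hexponent : 0 < α / (α - 1) := div_pos (by linarith) (by linarith)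
  constructor
  · have hQP' := S.sum_le_rpow_exp_mul_sum_of_sum_rpow_mul_rpow_one_sub_le
      (fun y => (hQ y).le) hP hα hQP
    rw [← inv_div, le_rpow_inv_iff_of_pos hQS (mul_nonneg (exp_pos ε).le hPS) hexponent] at hQP'
    rw [exp_neg, inv_mul_le_iff₀ (exp_pos ε)]
    exact hQP'
  · calc ∑ y ∈ S, P y ≤ (exp ε * ∑ y ∈ S, Q y) ^ ((α - 1) / α) :=
          S.sum_le_rpow_exp_mul_sum_of_sum_rpow_mul_rpow_one_sub_le
            (fun y => (hP y).le) hQ hα hPQ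
      _ = exp ε ^ ((α - 1) / α) * (∑ y ∈ S, Q y) ^ ((α - 1) / α) :=
          mul_rpow (exp_pos ε).le hQS
      _ ≤ exp ε * (∑ y ∈ S, Q y) ^ ((α - 1) / α) := by
          gcongr
          exact rpow_le_self_of_one_le (one_le_exp hε)
            (div_le_one_of_le₀ (by linarith) (by linarith))

theorem stmt_9 {Y : Type*} [Fintype Y] (P Q : Y → ℝ)
    (hP : ∀ y, 0 < P y) (hQ : ∀ y, 0 < Q y)
    (hPsum : ∑ y : Y, P y = 1) (hQsum : ∑ y : Y, Q y = 1)
    (α : ℝ) (hα : 1 < α) (ε : ℝ) (hε : 0 ≤ ε)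
    (hPQ : ∑ y : Y, (P y) ^ α * (Q y) ^ (1 - α) ≤ Real.exp ((α - 1) * ε))
    (hQP : ∑ y : Y, (Q y) ^ α * (P y) ^ (1 - α) ≤ Real.exp ((α - 1) * ε)) :
    ∀ S : Finset Y,
      Real.exp (-ε) * (∑ y ∈ S, Q y) ^ (α / (α - 1)) ≤ (∑ y ∈ S, P y) ∧
      (∑ y ∈ S, P y) ≤ Real.exp ε * (∑ y ∈ S, Q y) ^ ((α - 1) / α) :=
  stmt_9_general P Q hP hQ α hα ε hε hPQ hQP
end

section
/- Let Y be a finite type, P, Q : Y → ℝ probability vectors with P y ≥ 0 and Q y > 0 for all y, α > 1 real, ε ≥ 0, and δ ∈ (0, 1). Assume Σ_y (P y)^α (Q y)^(1-α) ≤ exp((α-1)·ε), i.e., D_α(P‖Q) ≤ ε. Then for every subset S ⊆ Y, Σ_{y ∈ S} P y ≤ exp(ε + log(1/δ)/(α-1)) · Σ_{y ∈ S} Q y + δ. -/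
/-!
Markov's inequality for the likelihood ratio. For `E > 0`, either `P y ≤ E * Q y`, or
`r = P y / (E * Q y) ≥ 1` and then `r ≤ r ^ α`, which reads `P y ≤ E ^ (1 - α) * P y ^ α * Q y ^ (1 - α)`.
Summing over `S` and taking `E = exp (ε + log (1 / δ) / (α - 1))`, the Rényi bound turns the
second term into `E ^ (1 - α) * exp ((α - 1) * ε) = δ`.
-/

open Real Finset

lemma rpow_mul_rpow_one_sub_eq {p q : ℝ} (hp : 0 ≤ p) (hq : 0 < q) (α : ℝ) :
    p ^ α * q ^ (1 - α) = q * (p / q) ^ α := by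
  rw [div_rpow hp hq.le, rpow_sub hq, rpow_one]
  field_simp

lemma le_mul_add_rpow_mul_rpow_mul_rpow {p q E α : ℝ} (hp : 0 ≤ p) (hq : 0 < q) (hE : 0 < E)
    (hα : 1 ≤ α) : p ≤ E * q + E ^ (1 - α) * (p ^ α * q ^ (1 - α)) := by
  have hEq : 0 < E * q := mul_pos hE hq
  by_cases hsmall : p ≤ E * q
  · have : 0 ≤ E ^ (1 - α) * (p ^ α * q ^ (1 - α)) := by positivity
    linarith
  · have hratio : 1 ≤ p / (E * q) := by
      rw [one_le_div hEq]
      exact (not_le.mp hsmall).le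
    calc p = E * q * (p / (E * q)) := by field_simp
      _ ≤ E * q * (p / (E * q)) ^ α :=
          mul_le_mul_of_nonneg_left (self_le_rpow_of_one_le hratio hα) hEq.le
      _ = p ^ α * (E * q) ^ (1 - α) := (rpow_mul_rpow_one_sub_eq hp hEq α).symm
      _ ≤ E * q + E ^ (1 - α) * (p ^ α * q ^ (1 - α)) := by
          rw [mul_rpow hE.le hq.le, mul_left_comm]
          linarith

lemma sum_le_mul_sum_add_rpow_mul_sum_rpow_mul_rpow {Y : Type*} [Fintype Y] {P Q : Y → ℝ}
    (hP : ∀ y, 0 ≤ P y) (hQ : ∀ y, 0 < Q y) {α E : ℝ} (hα : 1 ≤ α) (hE : 0 < E)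
    (S : Finset Y) :
    ∑ y ∈ S, P y ≤ E * ∑ y ∈ S, Q y + E ^ (1 - α) * ∑ y, P y ^ α * Q y ^ (1 - α) := by
  have hterm : ∀ y, 0 ≤ P y ^ α * Q y ^ (1 - α) := fun y => by
    have := hP y; have := (hQ y).le; positivity
  calc ∑ y ∈ S, P y
      ≤ ∑ y ∈ S, (E * Q y + E ^ (1 - α) * (P y ^ α * Q y ^ (1 - α))) :=
        sum_le_sum fun y _ => le_mul_add_rpow_mul_rpow_mul_rpow (hP y) (hQ y) hE hα
    _ = E * ∑ y ∈ S, Q y + E ^ (1 - α) * ∑ y ∈ S, P y ^ α * Q y ^ (1 - α) := by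
        rw [sum_add_distrib, mul_sum, mul_sum]
    _ ≤ E * ∑ y ∈ S, Q y + E ^ (1 - α) * ∑ y, P y ^ α * Q y ^ (1 - α) := by
        gcongr
        · exact fun y _ _ => hterm y
        · exact subset_univ S

lemma exp_rpow_one_sub_mul_exp_eq {α ε δ : ℝ} (hα : 1 < α) (hδ : 0 < δ) :
    exp (ε + log (1 / δ) / (α - 1)) ^ (1 - α) * exp ((α - 1) * ε) = δ := by
  have hα' : α - 1 ≠ 0 := sub_ne_zero.mpr hα.ne'
  rw [← exp_mul, ← exp_add, one_div, log_inv]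
  convert exp_log hδ using 2
  field_simp
  ring

theorem stmt_10_general {Y : Type*} [Fintype Y] (P Q : Y → ℝ)
    (hP : ∀ y, 0 ≤ P y) (hQ : ∀ y, 0 < Q y)
    (α : ℝ) (hα : 1 < α) (ε : ℝ)
    (δ : ℝ) (hδ0 : 0 < δ)
    (hRDP : ∑ y : Y, (P y) ^ α * (Q y) ^ (1 - α) ≤ Real.exp ((α - 1) * ε)) :
    ∀ S : Finset Y,
      (∑ y ∈ S, P y) ≤
        Real.exp (ε + Real.log (1 / δ) / (α - 1)) * (∑ y ∈ S, Q y) + δ := by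
  intro S
  set E := exp (ε + log (1 / δ) / (α - 1))
  calc ∑ y ∈ S, P y
      ≤ E * ∑ y ∈ S, Q y + E ^ (1 - α) * ∑ y, P y ^ α * Q y ^ (1 - α) :=
        sum_le_mul_sum_add_rpow_mul_sum_rpow_mul_rpow hP hQ hα.le (exp_pos _) S
    _ ≤ E * ∑ y ∈ S, Q y + E ^ (1 - α) * exp ((α - 1) * ε) := by gcongr
    _ = E * ∑ y ∈ S, Q y + δ := by rw [exp_rpow_one_sub_mul_exp_eq hα hδ0]

theorem stmt_10 {Y : Type*} [Fintype Y] (P Q : Y → ℝ)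
    (hP : ∀ y, 0 ≤ P y) (hQ : ∀ y, 0 < Q y)
    (hPsum : ∑ y : Y, P y = 1) (hQsum : ∑ y : Y, Q y = 1)
    (α : ℝ) (hα : 1 < α) (ε : ℝ) (hε : 0 ≤ ε)
    (δ : ℝ) (hδ0 : 0 < δ) (hδ1 : δ < 1)
    (hRDP : ∑ y : Y, (P y) ^ α * (Q y) ^ (1 - α) ≤ Real.exp ((α - 1) * ε)) :
    ∀ S : Finset Y,
      (∑ y ∈ S, P y) ≤
        Real.exp (ε + Real.log (1 / δ) / (α - 1)) * (∑ y ∈ S, Q y) + δ :=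
  stmt_10_general P Q hP hQ α hα ε δ hδ0 hRDP
end

section
/- Let H be a real inner product space (a complete InnerProductSpace over ℝ), θ ∈ H, ν > 0, G ≥ 0, η > 0, and m a natural number with m·η·G < ν. Let N ≥ 1, and for each agent i ∈ Fin N let fᵢ : H → ℝ and gᵢ ∈ H be such that fᵢ has gradient gᵢ at every point of the open ball of radius ν around θ (HasGradientAt fᵢ gᵢ x for all x with ‖x - θ‖ < ν) and ‖gᵢ‖ ≤ G. Define the inner-loop gradient-descent iterates xᵢ : ℕ → H by xᵢ 0 = θ and xᵢ (k+1) = xᵢ k - η • gradient fᵢ (xᵢ k). Then for every i, xᵢ m = θ - (m·η) • gᵢ, and consequently the FedAvg outer-loop update θ + (1/N) • Σᵢ (xᵢ m - θ) equals θ - (m·η) • ((1/N) • Σᵢ gᵢ), i.e., one full-gradient step with learning rate m·η on the global objective F = (1/N)Σᵢ fᵢ. -/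
open Metric

/-- Each step moves the iterate by `η • c`, so `hm` keeps the first `m` iterates inside the ball,
where the gradient is `c`. -/
theorem gradientDescent_eq_of_hasGradientAt_const_on_ball {H : Type*} [NormedAddCommGroup H]
    [InnerProductSpace ℝ H] [CompleteSpace H] {f : H → ℝ} {c θ : H} {ν η : ℝ} {m : ℕ}
    (hη : 0 ≤ η) (hm : m * η * ‖c‖ < ν) (hf : ∀ y ∈ ball θ ν, HasGradientAt f c y)
    {x : ℕ → H} (hx0 : x 0 = θ) (hxs : ∀ k, x (k + 1) = x k - η • gradient f (x k)) :
    ∀ k ≤ m, x k = θ - ((k : ℝ) * η) • c := by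
  intro k hk
  induction k with
  | zero => simp [hx0]
  | succ k ih =>
    have hxk := ih (Nat.le_of_succ_le hk)
    have hk_ball : x k ∈ ball θ ν := by
      have hkm : (k : ℝ) ≤ m := by exact_mod_cast Nat.le_of_succ_le hk
      rw [hxk, mem_ball_iff_norm, sub_sub_cancel_left, norm_neg, norm_smul,
        Real.norm_of_nonneg (by positivity)]
      calc (k : ℝ) * η * ‖c‖ ≤ m * η * ‖c‖ := by gcongr
        _ < ν := hm
    rw [hxs, (hf _ hk_ball).gradient, hxk]
    push_cast
    module

theorem stmt_12_general {H : Type*} [NormedAddCommGroup H] [InnerProductSpace ℝ H]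
    [CompleteSpace H] (θ : H) (ν : ℝ) (G : ℝ)
    (η : ℝ) (hη : 0 < η) (m : ℕ) (hm : (m : ℝ) * η * G < ν)
    (N : ℕ) (f : Fin N → H → ℝ) (g : Fin N → H)
    (hgrad : ∀ i, ∀ x : H, ‖x - θ‖ < ν → HasGradientAt (f i) (g i) x)
    (hGbd : ∀ i, ‖g i‖ ≤ G)
    (x : Fin N → ℕ → H) (hx0 : ∀ i, x i 0 = θ)
    (hxs : ∀ i k, x i (k + 1) = x i k - η • gradient (f i) (x i k)) :
    (∀ i, x i m = θ - ((m : ℝ) * η) • g i) ∧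
    θ + (1 / (N : ℝ)) • ∑ i : Fin N, (x i m - θ) =
      θ - ((m : ℝ) * η) • ((1 / (N : ℝ)) • ∑ i : Fin N, g i) := by
  have hxm : ∀ i, x i m = θ - ((m : ℝ) * η) • g i := fun i ↦
    have hmi : (m : ℝ) * η * ‖g i‖ < ν :=
      lt_of_le_of_lt (by gcongr; exact hGbd i) hm
    gradientDescent_eq_of_hasGradientAt_const_on_ball hη.le hmi
      (fun y hy ↦ hgrad i y (mem_ball_iff_norm.mp hy)) (hx0 i) (hxs i) m le_rfl
  refine ⟨hxm, ?_⟩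
  simp only [hxm, sub_sub_cancel_left, Finset.sum_neg_distrib, ← Finset.smul_sum]
  module

theorem stmt_12 {H : Type*} [NormedAddCommGroup H] [InnerProductSpace ℝ H]
    [CompleteSpace H] (θ : H) (ν : ℝ) (hν : 0 < ν) (G : ℝ) (hG : 0 ≤ G)
    (η : ℝ) (hη : 0 < η) (m : ℕ) (hm : (m : ℝ) * η * G < ν)
    (N : ℕ) (hN : 1 ≤ N) (f : Fin N → H → ℝ) (g : Fin N → H)
    (hgrad : ∀ i, ∀ x : H, ‖x - θ‖ < ν → HasGradientAt (f i) (g i) x)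
    (hGbd : ∀ i, ‖g i‖ ≤ G)
    (x : Fin N → ℕ → H) (hx0 : ∀ i, x i 0 = θ)
    (hxs : ∀ i k, x i (k + 1) = x i k - η • gradient (f i) (x i k)) :
    (∀ i, x i m = θ - ((m : ℝ) * η) • g i) ∧
    θ + (1 / (N : ℝ)) • ∑ i : Fin N, (x i m - θ) =
      θ - ((m : ℝ) * η) • ((1 / (N : ℝ)) • ∑ i : Fin N, g i) :=
  stmt_12_general θ ν G η hη m hm N f g hgrad hGbd x hx0 hxs
end
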